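/- Let A ∈ R^{m×n}, b ∈ R^m, and x* ∈ R^n. Set y* = x*/√(1+‖x*‖²) and z* = 1/√(1+‖x*‖²). If x* is a local minimizer of x ↦ ‖Ax − b‖²/(‖x‖² + 1), then (y*, z*) is a local minimizer of (y,z) ↦ ‖Ay − bz‖² subject to ‖y‖² + z² = 1. -/
import Mathlib


/-- The total least squares objective `‖Ax - b‖² / (‖x‖² + 1)`. -/
noncomputable def tlsObj {m n : ℕ} (A : Matrix (Fin m) (Fin n) ℝ) (b : Fin m → ℝ)
    (x : EuclideanSpace ℝ (Fin n)) : ℝ :=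
  (∑ i, (∑ j, A i j * x j - b i) ^ 2) / (‖x‖ ^ 2 + 1)

/-- The homogenized objective `‖Ay - bz‖²`. -/
noncomputable def homObj {m n : ℕ} (A : Matrix (Fin m) (Fin n) ℝ) (b : Fin m → ℝ)
    (p : EuclideanSpace ℝ (Fin n) × ℝ) : ℝ :=
  ∑ i, (∑ j, A i j * p.1 j - b i * p.2) ^ 2

theorem stmt9 {m n : ℕ} (A : Matrix (Fin m) (Fin n) ℝ) (b : Fin m → ℝ)
    (xs : EuclideanSpace ℝ (Fin n))
    (hloc : ∃ ε > 0, ∀ x : EuclideanSpace ℝ (Fin n), ‖x - xs‖ < ε →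
      tlsObj A b xs ≤ tlsObj A b x)
    (ys : EuclideanSpace ℝ (Fin n)) (zs : ℝ)
    (hy : ys = (Real.sqrt (1 + ‖xs‖ ^ 2))⁻¹ • xs)
    (hz : zs = (Real.sqrt (1 + ‖xs‖ ^ 2))⁻¹) :
    ∃ ε > 0, ∀ p : EuclideanSpace ℝ (Fin n) × ℝ,
      ‖p.1‖ ^ 2 + p.2 ^ 2 = 1 → dist p (ys, zs) < ε →
      homObj A b (ys, zs) ≤ homObj A b p := by
  obtain ⟨ε, hε, hmin⟩ := hloc
  set s := Real.sqrt (1 + ‖xs‖ ^ 2) with hs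
  have hsq : s ^ 2 = 1 + ‖xs‖ ^ 2 := Real.sq_sqrt (by positivity)
  have hspos : 0 < s := Real.sqrt_pos.mpr (by positivity)
  have hzpos : 0 < zs := by rw [hz]; positivity
  -- key transformation
  have key : ∀ (y : EuclideanSpace ℝ (Fin n)) (z : ℝ), z ≠ 0 → ‖y‖ ^ 2 + z ^ 2 = 1 →
      homObj A b (y, z) = tlsObj A b (z⁻¹ • y) := by
    intro y z hzne hsph
    have hiz : z⁻¹ ^ 2 ≠ 0 := pow_ne_zero 2 (inv_ne_zero hzne)
    have hnorm : ‖(z⁻¹ • y : EuclideanSpace ℝ (Fin n))‖ ^ 2 = z⁻¹ ^ 2 * ‖y‖ ^ 2 := by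
      rw [norm_smul, mul_pow, norm_inv, Real.norm_eq_abs, inv_pow, sq_abs, inv_pow]
    have hden : z⁻¹ ^ 2 * ‖y‖ ^ 2 + 1 = z⁻¹ ^ 2 := by
      field_simp
      linarith
    have hnum : ∀ i, (∑ j, A i j * (z⁻¹ • y : EuclideanSpace ℝ (Fin n)) j - b i)
        = z⁻¹ * (∑ j, A i j * y j - b i * z) := by
      intro i
      have h1 : ∀ j ∈ Finset.univ, A i j * (z⁻¹ • y : EuclideanSpace ℝ (Fin n)) j
          = z⁻¹ * (A i j * y j) := by
        intro j _
        simp only [PiLp.smul_apply, smul_eq_mul]; ring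
      rw [Finset.sum_congr rfl h1, ← Finset.mul_sum]
      field_simp
    unfold tlsObj homObj
    dsimp only
    calc ∑ i, (∑ j, A i j * y j - b i * z) ^ 2
        = (z⁻¹ ^ 2 * ∑ i, (∑ j, A i j * y j - b i * z) ^ 2) / z⁻¹ ^ 2 := by
          exact (mul_div_cancel_left₀ _ hiz).symm
      _ = (∑ i, (∑ j, A i j * (z⁻¹ • y : EuclideanSpace ℝ (Fin n)) j - b i) ^ 2) / z⁻¹ ^ 2 := by
          rw [Finset.mul_sum]
          congr 1
          refine Finset.sum_congr rfl fun i _ => ?_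
          rw [hnum i, mul_pow]
      _ = (∑ i, (∑ j, A i j * (z⁻¹ • y : EuclideanSpace ℝ (Fin n)) j - b i) ^ 2)
            / (‖(z⁻¹ • y : EuclideanSpace ℝ (Fin n))‖ ^ 2 + 1) := by
          rw [hnorm, hden]
  -- sphere condition at (ys, zs)
  have hnys : ‖ys‖ ^ 2 = s⁻¹ ^ 2 * ‖xs‖ ^ 2 := by
    rw [hy, norm_smul, mul_pow, norm_inv, Real.norm_eq_abs, abs_of_pos hspos]
  have hsph0 : ‖ys‖ ^ 2 + zs ^ 2 = 1 := by
    rw [hnys, hz]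
    field_simp
    linarith [hsq]
  have hxeq : zs⁻¹ • ys = xs := by
    rw [hy, hz, inv_inv, smul_smul, mul_inv_cancel₀ (ne_of_gt hspos), one_smul]
  have hbase : homObj A b (ys, zs) = tlsObj A b xs := by
    rw [key ys zs (ne_of_gt hzpos) hsph0, hxeq]
  -- continuity of p ↦ p.2⁻¹ • p.1
  have hcont : ContinuousAt (fun p : EuclideanSpace ℝ (Fin n) × ℝ => p.2⁻¹ • p.1) (ys, zs) :=
    (continuousAt_snd.inv₀ (ne_of_gt hzpos)).smul continuousAt_fst
  rw [Metric.continuousAt_iff] at hcont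
  obtain ⟨δ, hδ, hδc⟩ := hcont ε hε
  refine ⟨min δ zs, lt_min hδ hzpos, fun p hsph hdist => ?_⟩
  have hz2 : 0 < p.2 := by
    have h1 : dist p.2 zs ≤ dist p (ys, zs) := by
      rw [Prod.dist_eq]; exact le_max_right _ _
    have h2 : |p.2 - zs| < zs := by
      rw [← Real.dist_eq]
      exact lt_of_le_of_lt h1 (lt_of_lt_of_le hdist (min_le_right _ _))
    have := abs_lt.mp h2
    linarith
  have hclose : ‖p.2⁻¹ • p.1 - xs‖ < ε := by
    have := hδc (lt_of_lt_of_le hdist (min_le_left _ _))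
    simpa [dist_eq_norm, hxeq] using this
  calc homObj A b (ys, zs) = tlsObj A b xs := hbase
    _ ≤ tlsObj A b (p.2⁻¹ • p.1) := hmin _ hclose
    _ = homObj A b p := (key p.1 p.2 (ne_of_gt hz2) hsph).symm
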